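/- Let G be a bipartite finite simple graph having at least one eigenvalue greater than 2. Suppose that for every subset M of V(G) that is minimal with respect to the property that the induced subgraph G|_M has index greater than 2 (that is, λ(G|_M) > 2 but every proper induced subgraph of G|_M has index at most 2), the induced subgraph on V(G) − M is cyclotomic. Then G is a Salem graph; that is, G has exactly one eigenvalue λ > 2 and its only eigenvalue less than −2 is −λ. -/

import Mathlib

open Polynomial

/-- The multiset of eigenvalues of the adjacency matrix of a finite simple graph. -/
noncomputable def adjEigs {V : Type} [Fintype V] (G : SimpleGraph V) : Multiset ℝ :=
  letI := Classical.decEq V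
  letI := Classical.decRel G.Adj
  ((SimpleGraph.adjMatrix ℝ G).charpoly).roots

/-!
If two eigenvalues exceeded 2, two orthogonal eigenvectors for them would give two disjoint
vertex sets `P`, `N` each inducing a subgraph of index greater than 2: either one eigenvector
changes sign and `P`, `N` are its positive and negative supports, or both have constant sign and
orthogonality makes their supports disjoint. That the positive support of an eigenvector `x` with
eigenvalue `μ` has index at least `μ` follows from the Rayleigh quotient of `x ⊔ 0`, because the
adjacency matrix is entrywise nonnegative. A minimal set `M ⊆ P` of index greater than 2 then has
`N` in its complement, so `Mᶜ` is not cyclotomic, the index being monotone under taking induced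
subgraphs. Hence the eigenvalue `λ > 2` is
unique, and since the spectrum of a bipartite graph is symmetric, any eigenvalue below `-2` is
`-λ`.
-/

open Matrix

lemma Matrix.mem_roots_charpoly_iff_mem_spectrum {ι K : Type*} [Fintype ι] [DecidableEq ι]
    [Field K] (A : Matrix ι ι K) {μ : K} : μ ∈ A.charpoly.roots ↔ μ ∈ spectrum K A := by
  rw [mem_roots A.charpoly_monic.ne_zero, mem_spectrum_iff_isRoot_charpoly]

lemma Finset.sum_coe_sort_of_eq_zero {ι M : Type*} [Fintype ι] [AddCommMonoid M] (s : Finset ι)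
    {f : ι → M} (hf : ∀ i ∉ s, f i = 0) : ∑ i : (s : Set ι), f i = ∑ i, f i :=
  (s.sum_coe_sort f).trans (sum_subset (subset_univ s) fun i _ hi => hf i hi)

lemma Finset.dotProduct_coe_sort_of_eq_zero {ι : Type*} [Fintype ι] {s : Finset ι} {z : ι → ℝ}
    (hz : ∀ i ∉ s, z i = 0) (y : ι → ℝ) :
    (fun a : (s : Set ι) => z a) ⬝ᵥ (fun a => y a) = z ⬝ᵥ y :=
  sum_coe_sort_of_eq_zero s (f := fun i => z i * y i) fun i hi => by simp [hz i hi]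

lemma Matrix.mul_dotProduct_le_of_nonneg_of_mulVec_eq {ι : Type*} [Fintype ι]
    {A : Matrix ι ι ℝ} (hA : ∀ i j, 0 ≤ A i j) {x : ι → ℝ} {μ : ℝ} (hx : A *ᵥ x = μ • x) :
    μ * ((x ⊔ 0) ⬝ᵥ (x ⊔ 0)) ≤ (x ⊔ 0) ⬝ᵥ (A *ᵥ (x ⊔ 0)) := by
  have hpx : (x ⊔ 0) ⬝ᵥ x = (x ⊔ 0) ⬝ᵥ (x ⊔ 0) := by
    refine Finset.sum_congr rfl fun i _ => ?_
    rcases le_total (x i) 0 with h | h <;> simp [h]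
  calc μ * ((x ⊔ 0) ⬝ᵥ (x ⊔ 0)) = (x ⊔ 0) ⬝ᵥ (A *ᵥ x) := by
        rw [hx, dotProduct_smul, hpx, smul_eq_mul]
    _ ≤ (x ⊔ 0) ⬝ᵥ (A *ᵥ (x ⊔ 0)) :=
        dotProduct_le_dotProduct_of_nonneg_left
          (fun i => dotProduct_le_dotProduct_of_nonneg_left le_sup_left (hA i)) le_sup_right

namespace Matrix.IsHermitian

variable {ι : Type*} [Fintype ι] [DecidableEq ι] {A : Matrix ι ι ℝ}

lemma posSemidef_smul_one_sub (hA : A.IsHermitian) {c : ℝ} (h : ∀ i, hA.eigenvalues i ≤ c) :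
    (c • 1 - A).PosSemidef := by
  have hdiag : diagonal (fun i => c - hA.eigenvalues i)
      = c • 1 - diagonal (RCLike.ofReal ∘ hA.eigenvalues) := by
    ext i j
    by_cases hij : i = j <;> simp [hij]
  have hconj : c • 1 - A = Unitary.conjStarAlgAut ℝ _ hA.eigenvectorUnitary
      (diagonal fun i => c - hA.eigenvalues i) := by
    conv_lhs => rw [hA.spectral_theorem]
    rw [hdiag, map_sub, map_smul, map_one]
  rw [hconj, Unitary.conjStarAlgAut_apply, Unitary.isUnit_coe.posSemidef_star_right_conjugate_iff]
  simpa [Pi.le_def] using h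

lemma dotProduct_mulVec_le (hA : A.IsHermitian) {c : ℝ} (h : ∀ i, hA.eigenvalues i ≤ c)
    (x : ι → ℝ) : x ⬝ᵥ (A *ᵥ x) ≤ c * (x ⬝ᵥ x) := by
  have := (hA.posSemidef_smul_one_sub h).dotProduct_mulVec_nonneg x
  simp only [star_trivial, sub_mulVec, smul_mulVec, one_mulVec, dotProduct_sub,
    dotProduct_smul, smul_eq_mul] at this
  linarith

lemma dotProduct_eigenvectorBasis (hA : A.IsHermitian) (i j : ι) :
    ⇑(hA.eigenvectorBasis i) ⬝ᵥ ⇑(hA.eigenvectorBasis j) = if i = j then 1 else 0 := by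
  rw [← orthonormal_iff_ite.mp hA.eigenvectorBasis.orthonormal i j,
    EuclideanSpace.inner_eq_star_dotProduct, dotProduct_comm]
  rfl

lemma mem_roots_charpoly_iff (hA : A.IsHermitian) {μ : ℝ} :
    μ ∈ A.charpoly.roots ↔ ∃ i, hA.eigenvalues i = μ := by
  simp [hA.roots_charpoly_eq_eigenvalues]

lemma exists_lt_mem_roots_charpoly_iff (hA : A.IsHermitian) (c : ℝ) :
    (∃ μ ∈ A.charpoly.roots, c < μ) ↔ ∃ x, c * (x ⬝ᵥ x) < x ⬝ᵥ (A *ᵥ x) := by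
  constructor
  · rintro ⟨μ, hμ, hcμ⟩
    obtain ⟨i, rfl⟩ := hA.mem_roots_charpoly_iff.mp hμ
    refine ⟨hA.eigenvectorBasis i, ?_⟩
    rw [hA.mulVec_eigenvectorBasis, dotProduct_smul, hA.dotProduct_eigenvectorBasis]
    simpa using hcμ
  · rintro ⟨x, hx⟩
    by_contra! h
    have hle : ∀ i, hA.eigenvalues i ≤ c := fun i => h _ (hA.mem_roots_charpoly_iff.mpr ⟨i, rfl⟩)
    exact (hA.dotProduct_mulVec_le hle x).not_gt hx

lemma exists_orthogonal_eigenvectors (hA : A.IsHermitian) {c : ℝ}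
    (h : 1 < Multiset.card (A.charpoly.roots.filter (c < ·))) :
    ∃ x y : ι → ℝ, x ≠ 0 ∧ y ≠ 0 ∧ x ⬝ᵥ y = 0 ∧
      (∃ μ, c < μ ∧ A *ᵥ x = μ • x) ∧ (∃ μ, c < μ ∧ A *ᵥ y = μ • y) := by
  rw [hA.roots_charpoly_eq_eigenvalues, Multiset.filter_map, Multiset.card_map,
    ← Finset.filter_val, ← Finset.card_def, Finset.one_lt_card] at h
  obtain ⟨i, hi, j, hj, hij⟩ := h
  have hne : ∀ k, ⇑(hA.eigenvectorBasis k) ≠ 0 := fun k h0 => by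
    simpa [h0] using hA.dotProduct_eigenvectorBasis k k
  refine ⟨_, _, hne i, hne j, by simp [hA.dotProduct_eigenvectorBasis, hij],
    ⟨_, ?_, hA.mulVec_eigenvectorBasis i⟩, ⟨_, ?_, hA.mulVec_eigenvectorBasis j⟩⟩
  · simpa using (Finset.mem_filter.mp hi).2
  · simpa using (Finset.mem_filter.mp hj).2

end Matrix.IsHermitian

section SignPattern

variable {ι : Type*} [Fintype ι]

lemma exists_sign_change_or_nonneg {x : ι → ℝ} (hx : x ≠ 0) :
    ((∃ i, 0 < x i) ∧ ∃ i, 0 < (-x) i) ∨ ∃ u, (u = x ∨ u = -x) ∧ 0 ≤ u ∧ ∃ i, 0 < u i := by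
  by_cases hpos : ∃ i, 0 < x i <;> by_cases hneg : ∃ i, 0 < (-x) i
  · exact .inl ⟨hpos, hneg⟩
  · simp only [not_exists, not_lt] at hneg
    exact .inr ⟨x, .inl rfl, fun i => by simpa using hneg i, hpos⟩
  · simp only [not_exists, not_lt] at hpos
    exact .inr ⟨-x, .inr rfl, fun i => by simpa using hpos i, hneg⟩
  · simp only [not_exists, not_lt] at hpos hneg
    exact absurd (funext fun i => le_antisymm (hpos i) (by simpa using hneg i)) hx

lemma disjoint_pos_of_nonneg_of_dotProduct_eq_zero {u w : ι → ℝ} (hu : 0 ≤ u) (hw : 0 ≤ w)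
    (huw : u ⬝ᵥ w = 0) : Disjoint ({i | 0 < u i} : Finset ι) ({i | 0 < w i} : Finset ι) := by
  have hzero := (Finset.sum_eq_zero_iff_of_nonneg fun i _ => mul_nonneg (hu i) (hw i)).mp huw
  refine Finset.disjoint_left.mpr fun i hui hwi => ?_
  simp only [Finset.mem_filter, Finset.mem_univ, true_and] at hui hwi
  exact (mul_pos hui hwi).ne' (hzero i (Finset.mem_univ i))

lemma exists_disjoint_pos_of_dotProduct_eq_zero {Q : (ι → ℝ) → Prop} (hQ : ∀ x, Q x → Q (-x))
    {x y : ι → ℝ} (hx : Q x) (hy : Q y) (hx0 : x ≠ 0) (hy0 : y ≠ 0) (hxy : x ⬝ᵥ y = 0) :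
    ∃ u w, Q u ∧ Q w ∧ (∃ i, 0 < u i) ∧ (∃ i, 0 < w i) ∧
      Disjoint ({i | 0 < u i} : Finset ι) ({i | 0 < w i} : Finset ι) := by
  have hsplit : ∀ z : ι → ℝ,
      Disjoint ({i | 0 < z i} : Finset ι) ({i | 0 < (-z) i} : Finset ι) := fun z =>
    Finset.disjoint_filter.mpr fun i _ hi => by simp only [Pi.neg_apply]; linarith
  rcases exists_sign_change_or_nonneg hx0 with ⟨hpos, hneg⟩ | ⟨u, hu, hu0, hupos⟩
  · exact ⟨x, -x, hx, hQ x hx, hpos, hneg, hsplit x⟩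
  rcases exists_sign_change_or_nonneg hy0 with ⟨hpos, hneg⟩ | ⟨w, hw, hw0, hwpos⟩
  · exact ⟨y, -y, hy, hQ y hy, hpos, hneg, hsplit y⟩
  have hQu : Q u := by rcases hu with rfl | rfl <;> [exact hx; exact hQ x hx]
  have hQw : Q w := by rcases hw with rfl | rfl <;> [exact hy; exact hQ y hy]
  have huw : u ⬝ᵥ w = 0 := by rcases hu with rfl | rfl <;> rcases hw with rfl | rfl <;> simp [hxy]
  exact ⟨u, w, hQu, hQw, hupos, hwpos, disjoint_pos_of_nonneg_of_dotProduct_eq_zero hu0 hw0 huw⟩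

end SignPattern

namespace SimpleGraph

variable {V : Type} [Fintype V] (G : SimpleGraph V)

lemma adjEigs_eq [DecidableEq V] [DecidableRel G.Adj] :
    adjEigs G = (G.adjMatrix ℝ).charpoly.roots := by
  unfold adjEigs
  congr!

lemma exists_lt_mem_adjEigs_iff [DecidableRel G.Adj] (c : ℝ) :
    (∃ μ ∈ adjEigs G, c < μ) ↔ ∃ x, c * (x ⬝ᵥ x) < x ⬝ᵥ (G.adjMatrix ℝ *ᵥ x) := by
  classical
  rw [adjEigs_eq, (G.isHermitian_adjMatrix ℝ).exists_lt_mem_roots_charpoly_iff]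

lemma exists_units_conj_adjMatrix_eq_neg [DecidableEq V] [DecidableRel G.Adj] (hG : G.Colorable 2) :
    ∃ D : (Matrix V V ℝ)ˣ, (D : Matrix V V ℝ) * G.adjMatrix ℝ * (↑D⁻¹ : Matrix V V ℝ) =
      -G.adjMatrix ℝ := by
  classical
  obtain ⟨col⟩ := hG
  let D : Matrix V V ℝ := diagonal fun v => if col v = 0 then 1 else -1
  have hD : D * D = 1 := by
    rw [diagonal_mul_diagonal, ← diagonal_one]
    congr 1
    ext v
    split_ifs <;> norm_num
  refine ⟨⟨D, D, hD, hD⟩, ?_⟩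
  ext u v
  simp only [D, Units.inv_mk, diagonal_mul, mul_diagonal, adjMatrix_apply]
  by_cases huv : G.Adj u v
  · have hne := col.valid huv
    revert hne
    generalize col u = a
    generalize col v = b
    fin_cases a <;> fin_cases b <;> simp [huv]
  · simp [huv]

lemma neg_mem_adjEigs (hG : G.Colorable 2) {μ : ℝ} (hμ : μ ∈ adjEigs G) : -μ ∈ adjEigs G := by
  classical
  obtain ⟨D, hD⟩ := G.exists_units_conj_adjMatrix_eq_neg hG
  have hspec : spectrum ℝ (-G.adjMatrix ℝ) = spectrum ℝ (G.adjMatrix ℝ) := by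
    rw [← hD, spectrum.units_conjugate]
  rw [adjEigs_eq, mem_roots_charpoly_iff_mem_spectrum] at hμ ⊢
  rw [← hspec, ← spectrum.neg_eq]
  exact Set.neg_mem_neg.mpr hμ

lemma adjMatrix_induce_mulVec_restrict [DecidableRel G.Adj] {s : Finset V} {z : V → ℝ}
    (hz : ∀ v ∉ s, z v = 0) :
    (G.induce (s : Set V)).adjMatrix ℝ *ᵥ (fun a => z a) =
      fun a : (s : Set V) => (G.adjMatrix ℝ *ᵥ z) a := by
  funext a
  exact Finset.sum_coe_sort_of_eq_zero s (f := fun v => G.adjMatrix ℝ a v * z v)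
    fun v hv => by simp [hz v hv]

lemma exists_lt_mem_adjEigs_induce_iff [DecidableRel G.Adj] (s : Finset V) (c : ℝ) :
    (∃ μ ∈ adjEigs (G.induce (s : Set V)), c < μ) ↔
      ∃ z : V → ℝ, (∀ v ∉ s, z v = 0) ∧ c * (z ⬝ᵥ z) < z ⬝ᵥ (G.adjMatrix ℝ *ᵥ z) := by
  classical
  rw [exists_lt_mem_adjEigs_iff]
  constructor
  · rintro ⟨w, hw⟩
    let z : V → ℝ := fun v => if h : v ∈ s then w ⟨v, h⟩ else 0
    have hz : ∀ v ∉ s, z v = 0 := fun v hv => dif_neg hv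
    have hzw : (fun a : (s : Set V) => z a) = w := funext fun a => dif_pos a.2
    refine ⟨z, hz, ?_⟩
    rwa [← Finset.dotProduct_coe_sort_of_eq_zero hz, ← Finset.dotProduct_coe_sort_of_eq_zero hz,
      ← adjMatrix_induce_mulVec_restrict G hz, hzw]
  · rintro ⟨z, hz, hcz⟩
    refine ⟨fun a => z a, ?_⟩
    rwa [adjMatrix_induce_mulVec_restrict G hz, Finset.dotProduct_coe_sort_of_eq_zero hz,
      Finset.dotProduct_coe_sort_of_eq_zero hz]

lemma exists_lt_mem_adjEigs_induce_of_subset {s t : Finset V} (hst : s ⊆ t) {c : ℝ}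
    (h : ∃ μ ∈ adjEigs (G.induce (s : Set V)), c < μ) :
    ∃ μ ∈ adjEigs (G.induce (t : Set V)), c < μ := by
  classical
  obtain ⟨z, hz, hcz⟩ := (G.exists_lt_mem_adjEigs_induce_iff s c).mp h
  exact (G.exists_lt_mem_adjEigs_induce_iff t c).mpr ⟨z, fun v hv => hz v fun h => hv (hst h), hcz⟩

lemma exists_lt_mem_adjEigs_induce_posSupport [DecidableRel G.Adj] {x : V → ℝ} {μ c : ℝ}
    (hx : G.adjMatrix ℝ *ᵥ x = μ • x) (hcμ : c < μ) (hpos : ∃ v, 0 < x v) :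
    ∃ ν ∈ adjEigs (G.induce (({v | 0 < x v} : Finset V) : Set V)), c < ν := by
  refine (G.exists_lt_mem_adjEigs_induce_iff _ c).mpr ⟨x ⊔ 0, fun v hv => ?_, ?_⟩
  · simp only [Finset.mem_filter, Finset.mem_univ, true_and, not_lt] at hv
    simp [hv]
  · obtain ⟨v, hv⟩ := hpos
    have hnorm : 0 < (x ⊔ 0) ⬝ᵥ (x ⊔ 0) :=
      Finset.sum_pos' (fun w _ => mul_self_nonneg _) ⟨v, Finset.mem_univ v, by simp [hv]⟩
    calc c * ((x ⊔ 0) ⬝ᵥ (x ⊔ 0)) < μ * ((x ⊔ 0) ⬝ᵥ (x ⊔ 0)) := by gcongr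
      _ ≤ _ := mul_dotProduct_le_of_nonneg_of_mulVec_eq (fun u w => by
          rw [adjMatrix_apply]; split_ifs <;> norm_num) hx

lemma exists_disjoint_of_one_lt_card_filter {c : ℝ}
    (h : 1 < Multiset.card ((adjEigs G).filter (c < ·))) :
    ∃ P N : Finset V, Disjoint P N ∧ (∃ μ ∈ adjEigs (G.induce (P : Set V)), c < μ) ∧
      ∃ μ ∈ adjEigs (G.induce (N : Set V)), c < μ := by
  classical
  rw [adjEigs_eq] at h
  obtain ⟨x, y, hx0, hy0, hxy, hx, hy⟩ :=
    (G.isHermitian_adjMatrix ℝ).exists_orthogonal_eigenvectors h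
  obtain ⟨u, w, ⟨μ, hcμ, hu⟩, ⟨ν, hcν, hw⟩, hupos, hwpos, hdisj⟩ :=
    exists_disjoint_pos_of_dotProduct_eq_zero
      (Q := fun z => ∃ μ, c < μ ∧ G.adjMatrix ℝ *ᵥ z = μ • z)
      (fun z ⟨μ, hcμ, hz⟩ => ⟨μ, hcμ, by rw [mulVec_neg, hz, smul_neg]⟩) hx hy hx0 hy0 hxy
  exact ⟨_, _, hdisj, G.exists_lt_mem_adjEigs_induce_posSupport hu hcμ hupos,
    G.exists_lt_mem_adjEigs_induce_posSupport hw hcν hwpos⟩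

end SimpleGraph

/-- A bipartite graph with an eigenvalue greater than 2, such that for every vertex
subset `M` minimal with respect to having index greater than 2 the complementary induced
subgraph is cyclotomic, is a Salem graph. -/
theorem bipartite_minimal_complement_salem {n : ℕ} (G : SimpleGraph (Fin n))
    (hbip : G.Colorable 2) (hbig : ∃ μ ∈ adjEigs G, 2 < μ)
    (hmin : ∀ M : Finset (Fin n),
      ((∃ μ ∈ adjEigs (G.induce (M : Set (Fin n))), 2 < μ) ∧
        (∀ s : Finset (Fin n), s ⊂ M → ∀ μ ∈ adjEigs (G.induce (s : Set (Fin n))), μ ≤ 2)) →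
      ∀ μ ∈ adjEigs (G.induce ((Mᶜ : Finset (Fin n)) : Set (Fin n))), -2 ≤ μ ∧ μ ≤ 2) :
    ∃ lam ∈ adjEigs G, 2 < lam ∧
      Multiset.card ((adjEigs G).filter (fun μ => 2 < μ)) = 1 ∧
      ∀ μ ∈ adjEigs G, μ < -2 → μ = -lam := by
  obtain ⟨lam, hlam, hlam2⟩ := hbig
  have hlam_mem : lam ∈ (adjEigs G).filter (2 < ·) := Multiset.mem_filter.mpr ⟨hlam, hlam2⟩
  have hcard : Multiset.card ((adjEigs G).filter (2 < ·)) = 1 := by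
    refine le_antisymm (not_lt.mp fun h => ?_) (Multiset.card_pos_iff_exists_mem.mpr ⟨_, hlam_mem⟩)
    obtain ⟨P, N, hPN, hP, hN⟩ := G.exists_disjoint_of_one_lt_card_filter h
    obtain ⟨M, hMP, hM⟩ := exists_minimal_le_of_wellFoundedLT
      (fun s : Finset (Fin n) => ∃ μ ∈ adjEigs (G.induce (s : Set (Fin n))), 2 < μ) P hP
    have hcyc := hmin M
      ⟨hM.prop, fun s hs μ hμ => not_lt.mp fun h2 => hM.not_prop_of_lt hs ⟨μ, hμ, h2⟩⟩
    obtain ⟨μ, hμ, hμ2⟩ := G.exists_lt_mem_adjEigs_induce_of_subset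
      (Finset.subset_compl_iff_disjoint_left.mpr (hPN.mono_left hMP)) hN
    exact (hcyc μ hμ).2.not_gt hμ2
  refine ⟨lam, hlam, hlam2, hcard, fun μ hμ hμ2 => ?_⟩
  have hneg_mem : -μ ∈ (adjEigs G).filter (2 < ·) :=
    Multiset.mem_filter.mpr ⟨G.neg_mem_adjEigs hbip hμ, by linarith⟩
  obtain ⟨a, ha⟩ := Multiset.card_eq_one.mp hcard
  rw [ha, Multiset.mem_singleton] at hlam_mem hneg_mem
  linarith
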